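/- arXiv:2512.01689 — 6 statements merged into one kernel-verified Lean document; each statement's English description precedes it below -/
import Mathlib

section
/- Let μ be a probability measure on X = ℝ × ℤ/2ℤ such that μ̂(s,0) = exp(−σs²) for some σ ≥ 0 and all s ∈ ℝ, and such that μ̂(s,1) = exp(−P(s)) for some polynomial P with complex coefficients and all s ∈ ℝ. Then the degree of P is at most 2. -/
open MeasureTheory Complex Filter

open scoped Real

variable {ν : Measure ℝ} [IsProbabilityMeasure ν] {σ : ℝ}

lemma gauss_main (hσ : 0 ≤ σ)
    (hν : ∀ s : ℝ, (∫ t : ℝ, cexp (↑s * ↑t * I) ∂ν) = cexp (-(σ:ℂ) * s^2))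
    (a b' : ℝ) (ha : 0 < a) :
    ((Real.pi:ℂ)/a) ^ (1/2 : ℂ) * ∫ t : ℝ, cexp (-(((t:ℂ) + b')^2) / (4*a)) ∂ν
      = ((Real.pi:ℂ)/((a:ℂ)+σ)) ^ (1/2 : ℂ) * cexp (-((b':ℂ))^2 / (4*((a:ℂ)+σ))) := by
  have hare : (0:ℝ) < ((a:ℂ)).re := by simpa using ha
  set K : ℝ → ℝ → ℂ := fun t s => cexp (I * ((t:ℂ) + b') * s) * cexp (-(a:ℂ) * s ^ 2) with hK
  have hKcont : Continuous (Function.uncurry K) := by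
    apply Continuous.mul
    · apply Complex.continuous_exp.comp
      continuity
    · apply Complex.continuous_exp.comp
      continuity
  have step1 : ∀ t : ℝ, ∫ s : ℝ, K t s
      = ((Real.pi:ℂ)/a) ^ (1/2 : ℂ) * cexp (-(((t:ℂ) + b')^2) / (4*a)) := fun t =>
    fourierIntegral_gaussian hare ((t:ℂ) + b')
  have hKnorm : ∀ t s : ℝ, ‖K t s‖ = Real.exp (-a * s^2) := by
    intro t s
    rw [hK]
    simp only [norm_mul, Complex.norm_exp]
    have h1 : (I * ((t:ℂ) + b') * s).re = 0 := by simp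
    have h2 : ((-(a:ℂ)) * (s:ℂ) ^ 2).re = -a * s^2 := by
      simp [← Complex.ofReal_pow]
    rw [h1, h2, Real.exp_zero, one_mul]
  have hint : Integrable (Function.uncurry K) (ν.prod volume) := by
    rw [integrable_prod_iff hKcont.aestronglyMeasurable]
    refine ⟨Filter.Eventually.of_forall fun t => ?_, ?_⟩
    · apply (integrable_cexp_quadratic hare (I * ((t:ℂ) + b')) 0).congr
      refine Filter.Eventually.of_forall fun s => ?_
      simp only [Function.uncurry_apply_pair, hK, ← Complex.exp_add]
      congr 1
      ring
    · apply (integrable_const (∫ s : ℝ, Real.exp (-a * s^2))).congr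
      refine Filter.Eventually.of_forall fun t => ?_
      simp only [Function.uncurry_apply_pair]
      congr 1
      funext s
      exact (hKnorm t s).symm
  have hre2 : (0:ℝ) < ((a:ℂ) + (σ:ℂ)).re := by
    simp only [Complex.add_re, Complex.ofReal_re]
    linarith
  calc ((Real.pi:ℂ)/a) ^ (1/2 : ℂ) * ∫ t : ℝ, cexp (-(((t:ℂ) + b')^2) / (4*a)) ∂ν
      = ∫ t : ℝ, ((Real.pi:ℂ)/a) ^ (1/2 : ℂ) * cexp (-(((t:ℂ) + b')^2) / (4*a)) ∂ν :=
        (integral_const_mul _ _).symm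
    _ = ∫ t : ℝ, (∫ s : ℝ, K t s) ∂ν := by
        congr 1
        funext t
        rw [step1 t]
    _ = ∫ s : ℝ, (∫ t : ℝ, K t s ∂ν) := integral_integral_swap hint
    _ = ∫ s : ℝ, cexp (I * (b':ℂ) * s) * cexp (-((a:ℂ)+(σ:ℂ)) * (s:ℂ) ^ 2) := by
        congr 1
        funext s
        have hpt : (fun t : ℝ => K t s)
            = fun t : ℝ => (cexp (I * (b':ℂ) * s) * cexp (-(a:ℂ) * (s:ℂ)^2)) * cexp (↑s * ↑t * I) := by
          funext t
          simp only [hK, ← Complex.exp_add]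
          congr 1
          ring
        rw [hpt, integral_const_mul, hν s, mul_assoc]
        congr 1
        rw [← Complex.exp_add]
        congr 1
        ring
    _ = ((Real.pi:ℂ)/((a:ℂ)+σ)) ^ (1/2 : ℂ) * cexp (-((b':ℂ))^2 / (4*((a:ℂ)+σ))) :=
        fourierIntegral_gaussian hre2 (b':ℂ)

lemma gauss_real_bound (hσ : 0 ≤ σ)
    (hν : ∀ s : ℝ, (∫ t : ℝ, cexp (↑s * ↑t * I) ∂ν) = cexp (-(σ:ℂ) * s^2))
    (a b' : ℝ) (ha : 0 < a) :
    ∫ t : ℝ, Real.exp (-(t + b')^2 / (4*a)) ∂ν ≤ Real.exp (-(b'^2) / (4*(a+σ))) := by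
  have hmain := gauss_main hσ hν a b' ha
  set Lre := ∫ t : ℝ, Real.exp (-(t + b')^2 / (4*a)) ∂ν with hLre
  have hofReal : ∫ t : ℝ, cexp (-(((t:ℂ) + b')^2) / (4*a)) ∂ν = (Lre : ℂ) := by
    rw [hLre]
    rw [show (fun t : ℝ => cexp (-(((t:ℂ) + b')^2) / (4*a)))
        = fun t : ℝ => ((Real.exp (-(t + b')^2 / (4*a)) : ℝ) : ℂ) from funext fun t => by
      rw [Complex.ofReal_exp]; congr 1; push_cast; ring]
    exact integral_ofReal
  rw [hofReal] at hmain
  have hπa : (0:ℝ) < π / a := div_pos Real.pi_pos ha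
  have hπaσ : (0:ℝ) < π / (a + σ) := div_pos Real.pi_pos (by linarith)
  have hb1 : ((Real.pi:ℂ)/a) = (((π / a : ℝ)):ℂ) := by push_cast; ring
  have hb2 : ((Real.pi:ℂ)/((a:ℂ)+σ)) = (((π / (a+σ) : ℝ)):ℂ) := by push_cast; ring
  have hnorm := congrArg norm hmain
  rw [norm_mul, norm_mul, hb1, hb2, Complex.norm_cpow_eq_rpow_re_of_pos hπa,
    Complex.norm_cpow_eq_rpow_re_of_pos hπaσ, Complex.norm_real, Real.norm_eq_abs, Complex.norm_exp] at hnorm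
  have hLre0 : 0 ≤ Lre := by
    rw [hLre]
    exact integral_nonneg fun t => (Real.exp_pos _).le
  rw [_root_.abs_of_nonneg hLre0] at hnorm
  have hreexp : (-((b':ℂ))^2 / (4*((a:ℂ)+σ))).re = -(b'^2) / (4*(a+σ)) := by
    have : (-((b':ℂ))^2 / (4*((a:ℂ)+σ))) = (((-(b'^2) / (4*(a+σ)) : ℝ)):ℂ) := by
      push_cast
      field_simp
    rw [this, Complex.ofReal_re]
  rw [hreexp] at hnorm
  have hhalf : ((1:ℂ)/2).re = (1/2 : ℝ) := by norm_num
  rw [hhalf] at hnorm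
  have hc1pos : (0:ℝ) < (π / a) ^ (1/2 : ℝ) := Real.rpow_pos_of_pos hπa _
  have hc2le : (π / (a+σ)) ^ (1/2 : ℝ) ≤ (π / a) ^ (1/2 : ℝ) := by
    apply Real.rpow_le_rpow hπaσ.le _ (by norm_num)
    apply div_le_div_of_nonneg_left Real.pi_pos.le ha
    linarith
  have : (π / a) ^ (1/2 : ℝ) * Lre ≤ (π / a) ^ (1/2 : ℝ) * Real.exp (-(b'^2) / (4*(a+σ))) := by
    rw [hnorm]
    exact mul_le_mul_of_nonneg_right hc2le (Real.exp_pos _).le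
  exact le_of_mul_le_mul_left this hc1pos

lemma exp_quad_bound (hσ : 0 ≤ σ)
    (hν : ∀ s : ℝ, (∫ t : ℝ, cexp (↑s * ↑t * I) ∂ν) = cexp (-(σ:ℂ) * s^2))
    (a b : ℝ) (ha : 0 < a) :
    ∫ t : ℝ, Real.exp (b*t - t^2/(4*a)) ∂ν ≤ Real.exp (σ*b^2) := by
  have key := gauss_real_bound hσ hν a (-2*a*b) ha
  have hpt : (fun t : ℝ => Real.exp (b*t - t^2/(4*a)))
      = fun t : ℝ => Real.exp (-(t + (-2*a*b))^2 / (4*a)) * Real.exp (a*b^2) :=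
    funext fun t => by rw [← Real.exp_add]; congr 1; field_simp; ring
  rw [hpt, integral_mul_const]
  calc (∫ t : ℝ, Real.exp (-(t + (-2*a*b))^2 / (4*a)) ∂ν) * Real.exp (a*b^2)
      ≤ Real.exp (-((-2*a*b)^2) / (4*(a+σ))) * Real.exp (a*b^2) :=
        mul_le_mul_of_nonneg_right key (Real.exp_pos _).le
    _ = Real.exp (a*b^2 - (-2*a*b)^2/(4*(a+σ))) := by rw [← Real.exp_add]; ring_nf
    _ ≤ Real.exp (σ*b^2) := by
        rw [Real.exp_le_exp, sub_le_iff_le_add, ← sub_le_iff_le_add']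
        rw [le_div_iff₀ (show (0:ℝ) < 4*(a+σ) by linarith)]
        nlinarith [sq_nonneg (σ*b), sq_nonneg b]

lemma mgf_lintegral_bound (hσ : 0 ≤ σ)
    (hν : ∀ s : ℝ, (∫ t : ℝ, cexp (↑s * ↑t * I) ∂ν) = cexp (-(σ:ℂ) * s^2))
    (b : ℝ) :
    ∫⁻ t : ℝ, ENNReal.ofReal (Real.exp (b*t)) ∂ν ≤ ENNReal.ofReal (Real.exp (σ*b^2)) := by
  set f : ℕ → ℝ → ENNReal :=
    fun m t => ENNReal.ofReal (Real.exp (b*t - t^2/(4*((m:ℝ)+1)))) with hf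
  have hmono : Monotone f := by
    intro m m' hmm t
    apply ENNReal.ofReal_le_ofReal
    apply Real.exp_le_exp.mpr
    have h1 : (0:ℝ) < 4*((m:ℝ)+1) := by positivity
    have h3 : 4*((m:ℝ)+1) ≤ 4*((m':ℝ)+1) := by
      have : (m:ℝ) ≤ (m':ℝ) := Nat.cast_le.mpr hmm
      linarith
    have h4 := div_le_div_of_nonneg_left (sq_nonneg t) h1 h3
    linarith
  have hmeas : ∀ m : ℕ, Measurable (f m) := by
    intro m
    apply ENNReal.measurable_ofReal.comp
    apply Measurable.comp Real.measurable_exp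
    fun_prop
  have hsup : ∀ t : ℝ, (⨆ m : ℕ, f m t) = ENNReal.ofReal (Real.exp (b*t)) := by
    intro t
    have htend : Filter.Tendsto (fun m : ℕ => f m t) Filter.atTop
        (nhds (ENNReal.ofReal (Real.exp (b*t)))) := by
      apply (ENNReal.continuous_ofReal.tendsto _).comp
      apply (Real.continuous_exp.tendsto _).comp
      have h0 : Filter.Tendsto (fun m : ℕ => t^2/(4*((m:ℝ)+1))) Filter.atTop (nhds 0) := by
        have := tendsto_one_div_add_atTop_nhds_zero_nat (𝕜 := ℝ)
        have h2 : (fun m : ℕ => t^2/(4*((m:ℝ)+1))) = fun m : ℕ => (t^2/4) * (1/((m:ℝ)+1)) := by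
          funext m
          field_simp
        rw [h2]
        simpa using this.const_mul (t^2/4)
      have := (tendsto_const_nhds (x := b*t) (f := Filter.atTop (α := ℕ))).sub h0
      simpa using this
    exact tendsto_nhds_unique (tendsto_atTop_iSup (fun m m' h => hmono h t)) htend
  have hstep : ∀ m : ℕ, ∫⁻ t, f m t ∂ν ≤ ENNReal.ofReal (Real.exp (σ*b^2)) := by
    intro m
    have ha : (0:ℝ) < (m:ℝ)+1 := by positivity
    have hintm : Integrable (fun t : ℝ => Real.exp (b*t - t^2/(4*((m:ℝ)+1)))) ν := by
      apply Integrable.mono' (integrable_const (Real.exp (((m:ℝ)+1)*b^2)))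
      · apply Continuous.aestronglyMeasurable
        apply Real.continuous_exp.comp
        fun_prop
      · apply Filter.Eventually.of_forall
        intro t
        rw [Real.norm_eq_abs, _root_.abs_of_pos (Real.exp_pos _), Real.exp_le_exp]
        have hd : b*t - ((m:ℝ)+1)*b^2 ≤ t^2/(4*((m:ℝ)+1)) := by
          rw [le_div_iff₀ (by positivity : (0:ℝ) < 4*((m:ℝ)+1))]
          nlinarith [sq_nonneg (t - 2*((m:ℝ)+1)*b)]
        linarith
    rw [hf, ← ofReal_integral_eq_lintegral_ofReal hintm
      (Filter.Eventually.of_forall fun t => (Real.exp_pos _).le)]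
    exact ENNReal.ofReal_le_ofReal (exp_quad_bound hσ hν ((m:ℝ)+1) b ha)
  calc ∫⁻ t : ℝ, ENNReal.ofReal (Real.exp (b*t)) ∂ν
      = ∫⁻ t : ℝ, ⨆ m : ℕ, f m t ∂ν := by
        congr 1
        funext t
        rw [hsup t]
    _ = ⨆ m : ℕ, ∫⁻ t, f m t ∂ν := lintegral_iSup hmeas hmono
    _ ≤ ENNReal.ofReal (Real.exp (σ*b^2)) := iSup_le hstep

lemma exp_abs_integrable (hσ : 0 ≤ σ)
    (hν : ∀ s : ℝ, (∫ t : ℝ, cexp (↑s * ↑t * I) ∂ν) = cexp (-(σ:ℂ) * s^2))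
    (c : ℝ) : Integrable (fun t : ℝ => Real.exp (c*|t|)) ν := by
  constructor
  · apply Continuous.aestronglyMeasurable
    apply Real.continuous_exp.comp
    exact continuous_const.mul continuous_abs
  · rw [HasFiniteIntegral]
    calc ∫⁻ t, ‖Real.exp (c*|t|)‖₊ ∂ν
        = ∫⁻ t, ENNReal.ofReal (Real.exp (c*|t|)) ∂ν := by
          congr 1
          funext t
          exact Real.enorm_eq_ofReal (Real.exp_pos _).le
      _ ≤ ∫⁻ t, (ENNReal.ofReal (Real.exp (c*t)) + ENNReal.ofReal (Real.exp (-c*t))) ∂ν := by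
          apply lintegral_mono
          intro t
          rcases le_total 0 t with h | h
          · calc ENNReal.ofReal (Real.exp (c*|t|)) ≤ ENNReal.ofReal (Real.exp (c*t) + Real.exp (-c*t)) := by
                  apply ENNReal.ofReal_le_ofReal
                  rcases le_total 0 c with hc | hc
                  · rw [_root_.abs_of_nonneg h]
                    nlinarith [Real.exp_pos (-c*t)]
                  · rw [_root_.abs_of_nonneg h]
                    nlinarith [Real.exp_pos (c*t), Real.exp_le_exp.mpr (show c*t ≤ -c*t by nlinarith)]
              _ ≤ _ :=
                  le_of_eq (ENNReal.ofReal_add (Real.exp_pos _).le (Real.exp_pos _).le)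
          · calc ENNReal.ofReal (Real.exp (c*|t|)) ≤ ENNReal.ofReal (Real.exp (c*t) + Real.exp (-c*t)) := by
                  apply ENNReal.ofReal_le_ofReal
                  rcases le_total 0 c with hc | hc
                  · rw [_root_.abs_of_nonpos h]
                    nlinarith [Real.exp_pos (c*t), Real.exp_le_exp.mpr (show c*(-t) ≤ -c*t by nlinarith)]
                  · rw [_root_.abs_of_nonpos h]
                    nlinarith [Real.exp_pos (-c*t), Real.exp_le_exp.mpr (show c*(-t) ≤ c*t by nlinarith)]
              _ ≤ _ :=
                  le_of_eq (ENNReal.ofReal_add (Real.exp_pos _).le (Real.exp_pos _).le)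
      _ ≤ ENNReal.ofReal (Real.exp (σ*c^2)) + ENNReal.ofReal (Real.exp (σ*(-c)^2)) := by
          rw [lintegral_add_left]
          · exact add_le_add (mgf_lintegral_bound hσ hν c) (mgf_lintegral_bound hσ hν (-c))
          · apply ENNReal.measurable_ofReal.comp
            apply Measurable.comp Real.measurable_exp
            fun_prop
      _ < ⊤ := by
          apply ENNReal.add_lt_top.mpr
          exact ⟨ENNReal.ofReal_lt_top, ENNReal.ofReal_lt_top⟩

lemma exp_integral_bound (hσ : 0 ≤ σ)
    (hν : ∀ s : ℝ, (∫ t : ℝ, cexp (↑s * ↑t * I) ∂ν) = cexp (-(σ:ℂ) * s^2))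
    (b : ℝ) : ∫ t : ℝ, Real.exp (b*t) ∂ν ≤ Real.exp (σ*b^2) := by
  have hint : Integrable (fun t : ℝ => Real.exp (b*t)) ν := by
    apply Integrable.mono' (exp_abs_integrable hσ hν |b|)
    · apply Continuous.aestronglyMeasurable
      apply Real.continuous_exp.comp
      fun_prop
    · apply Filter.Eventually.of_forall
      intro t
      rw [Real.norm_eq_abs, _root_.abs_of_pos (Real.exp_pos _), Real.exp_le_exp]
      calc b*t ≤ |b * t| := le_abs_self _
        _ = |b| * |t| := abs_mul _ _
  rw [← ENNReal.ofReal_le_ofReal_iff (Real.exp_pos _).le,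
    ofReal_integral_eq_lintegral_ofReal hint
      (Filter.Eventually.of_forall fun t => (Real.exp_pos _).le)]
  exact mgf_lintegral_bound hσ hν b

section DegLemma
open Polynomial Finset


lemma deg_le_two_of_re_lower_bound (P : Polynomial ℂ) (c : ℝ) (hc : 0 ≤ c)
    (h : ∀ z : ℂ, -(c * ‖z‖ ^ 2) ≤ (P.eval z).re) : P.natDegree ≤ 2 := by
  by_contra hdeg
  push_neg at hdeg
  set n := P.natDegree with hn
  have hn3 : 3 ≤ n := hdeg
  have hP0 : P ≠ 0 := fun h0 => by rw [h0] at hn; simp [hn] at hn3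
  set c₀ := P.leadingCoeff with hc₀
  have hc₀0 : c₀ ≠ 0 := Polynomial.leadingCoeff_ne_zero.mpr hP0
  have hc₀pos : 0 < ‖c₀‖ := norm_pos_iff.mpr hc₀0
  obtain ⟨u, hu⟩ : ∃ u : ℂ, u ^ n = -(‖c₀‖ : ℂ) / c₀ :=
    ⟨(-(‖c₀‖ : ℂ) / c₀) ^ ((n : ℂ)⁻¹), Complex.cpow_nat_inv_pow _ (by omega)⟩
  have hun : c₀ * u ^ n = -(‖c₀‖ : ℂ) := by
    rw [hu]; field_simp
  have hnu : ‖u‖ = 1 := by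
    have h1 : ‖u‖ ^ n = (1 : ℝ) ^ n := by
      rw [← norm_pow, hu, one_pow, norm_div, norm_neg, Complex.norm_real, norm_norm,
        div_self (ne_of_gt hc₀pos)]
    exact pow_left_strictMonoOn₀ (by omega : n ≠ 0) |>.injOn (Set.mem_Ici.mpr (norm_nonneg u))
      (Set.mem_Ici.mpr zero_le_one) h1
  set Q := P.eraseLead with hQ
  set A := ∑ i ∈ range n, ‖Q.coeff i‖ with hA
  have hA0 : 0 ≤ A := Finset.sum_nonneg fun i _ => norm_nonneg _
  have hQdeg : Q.natDegree < n := lt_of_le_of_lt (P.eraseLead_natDegree_le) (by omega)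
  have hQeval : ∀ z : ℂ, 1 ≤ ‖z‖ → ‖Q.eval z‖ ≤ A * ‖z‖ ^ (n - 1) := by
    intro z hz
    rw [Polynomial.eval_eq_sum_range' hQdeg]
    calc ‖∑ i ∈ range n, Q.coeff i * z ^ i‖ ≤ ∑ i ∈ range n, ‖Q.coeff i * z ^ i‖ :=
          norm_sum_le _ _
      _ ≤ ∑ i ∈ range n, ‖Q.coeff i‖ * ‖z‖ ^ (n - 1) := by
          apply Finset.sum_le_sum
          intro i hi
          rw [norm_mul, norm_pow]
          exact mul_le_mul_of_nonneg_left
            (pow_le_pow_right₀ hz (by have := Finset.mem_range.mp hi; omega)) (norm_nonneg _)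
      _ = A * ‖z‖ ^ (n - 1) := by rw [← Finset.sum_mul]
  have key : ∀ r : ℝ, 1 ≤ r → ‖c₀‖ * r ≤ c + A := by
    intro r hr
    have hrpos : 0 < r := lt_of_lt_of_le one_pos hr
    set z := (r : ℂ) * u with hz
    have hznorm : ‖z‖ = r := by
      rw [hz, norm_mul, Complex.norm_real, hnu, mul_one, Real.norm_eq_abs, abs_of_pos hrpos]
    have hPz : P.eval z = Q.eval z + c₀ * z ^ n := by
      conv_lhs => rw [← P.eraseLead_add_C_mul_X_pow]
      rw [Polynomial.eval_add, Polynomial.eval_mul, Polynomial.eval_pow, Polynomial.eval_C,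
        Polynomial.eval_X]
    have hzn : c₀ * z ^ n = ((-(‖c₀‖ * r ^ n) : ℝ) : ℂ) := by
      rw [hz, mul_pow, ← mul_assoc, mul_comm c₀, mul_assoc, hun]
      push_cast
      ring
    have hre : (P.eval z).re = (Q.eval z).re - ‖c₀‖ * r ^ n := by
      rw [hPz, hzn, Complex.add_re, Complex.ofReal_re]; ring
    have h1 := h z
    rw [hre, hznorm] at h1
    have h2 : ‖c₀‖ * r ^ n ≤ c * r ^ 2 + A * r ^ (n - 1) := by
      have := (hQeval z (by rw [hznorm]; exact hr))
      rw [hznorm] at this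
      have h3 : (Q.eval z).re ≤ A * r ^ (n - 1) :=
        le_trans (Complex.re_le_norm _) this
      nlinarith
    have hr2 : r ^ 2 ≤ r ^ (n - 1) := pow_le_pow_right₀ hr (by omega)
    have h4 : ‖c₀‖ * r ^ n ≤ (c + A) * r ^ (n - 1) := by nlinarith
    have h5 : r ^ n = r * r ^ (n - 1) := by
      rw [← pow_succ']
      congr 1
      omega
    have h6 : 0 < r ^ (n - 1) := pow_pos hrpos _
    rw [h5] at h4
    refine le_of_mul_le_mul_right ?_ h6
    calc ‖c₀‖ * r * r ^ (n-1) = ‖c₀‖ * (r * r ^ (n-1)) := by ring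
      _ ≤ (c + A) * r ^ (n-1) := h4
  have hkey := key (max 1 ((c + A + 1) / ‖c₀‖)) (le_max_left _ _)
  have hm : (c + A + 1) / ‖c₀‖ ≤ max 1 ((c + A + 1) / ‖c₀‖) := le_max_right _ _
  have heq : ‖c₀‖ * ((c + A + 1) / ‖c₀‖) = c + A + 1 := by
    rw [mul_comm]; exact div_mul_cancel₀ _ hc₀pos.ne'
  have := mul_le_mul_of_nonneg_left hm hc₀pos.le
  linarith

end DegLemma

/-- The pairing `((t,k),(s,l)) = e^{ist}·(−1)^{kl}` between `ℝ × ℤ/2ℤ` and its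
character group (identified with `ℝ × ℤ/2ℤ`). -/
noncomputable def pairing (x y : ℝ × ZMod 2) : ℂ :=
  Complex.exp ((y.1 : ℂ) * (x.1 : ℂ) * Complex.I) * (-1 : ℂ) ^ (x.2 * y.2).val

/-- The characteristic function of a measure on `ℝ × ℤ/2ℤ`. -/
noncomputable def charFun2 (μ : Measure (ℝ × ZMod 2)) (y : ℝ × ZMod 2) : ℂ :=
  ∫ x, pairing x y ∂μ

theorem stmt_5 (μ : Measure (ℝ × ZMod 2)) [IsProbabilityMeasure μ]
    (σ : ℝ) (hσ : 0 ≤ σ) (P : Polynomial ℂ)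
    (h0 : ∀ s : ℝ, charFun2 μ (s, 0) = Complex.exp (-(σ : ℂ) * s ^ 2))
    (h1 : ∀ s : ℝ, charFun2 μ (s, 1) = Complex.exp (-(P.eval (s : ℂ)))) :
    P.natDegree ≤ 2 := by
  classical
  set ν : Measure ℝ := μ.map Prod.fst with hνdef
  have hνprob : IsProbabilityMeasure ν := Measure.isProbabilityMeasure_map measurable_fst.aemeasurable
  have hre : ∀ (z : ℂ) (t : ℝ), (z * (t:ℂ) * I).re = -(z.im * t) := by
    intro z t
    simp [Complex.mul_re, Complex.mul_im]
  -- characteristic function of the marginal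
  have hν : ∀ s : ℝ, (∫ t : ℝ, cexp ((s:ℂ) * (t:ℂ) * I) ∂ν) = cexp (-(σ:ℂ) * s^2) := by
    intro s
    rw [hνdef, integral_map measurable_fst.aemeasurable (Continuous.aestronglyMeasurable (by
      apply Complex.continuous_exp.comp
      continuity))]
    rw [← h0 s]
    unfold charFun2 pairing
    congr 1
    funext x
    simp
  -- the weight function
  set w : ℝ × ZMod 2 → ℂ := fun x => (-1 : ℂ) ^ (x.2 * (1 : ZMod 2)).val with hw
  have hw_meas : Measurable w := by
    have : Measurable (fun k : ZMod 2 => (-1 : ℂ) ^ (k * (1 : ZMod 2)).val) :=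
      measurable_from_top
    exact this.comp measurable_snd
  have hw_norm : ∀ x, ‖w x‖ = 1 := by
    intro x
    rw [hw]
    simp [norm_pow]
  set F : ℂ → ℂ := fun z => ∫ x, cexp (z * (x.1:ℂ) * I) * w x ∂μ with hF
  have hFs : ∀ s : ℝ, F (s:ℂ) = charFun2 μ (s, 1) := fun s => rfl
  have hinteg : ∀ c : ℝ, Integrable (fun x : ℝ × ZMod 2 => Real.exp (c * |x.1|)) μ := by
    intro c
    have hcont : Continuous (fun t : ℝ => Real.exp (c * |t|)) := by
      apply Real.continuous_exp.comp
      exact continuous_const.mul continuous_abs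
    have h2 : Integrable (fun t : ℝ => Real.exp (c * |t|)) ν := by
      have h3 := exp_abs_integrable hσ hν c
      apply h3.congr
      apply Filter.Eventually.of_forall
      intro t
      ring_nf
    rw [hνdef] at h2
    have h4 := (integrable_map_measure hcont.aestronglyMeasurable
      measurable_fst.aemeasurable).mp h2
    exact h4
  have habs : ∀ (z : ℂ) (x : ℝ × ZMod 2),
      ‖cexp (z * (x.1:ℂ) * I) * w x‖ = Real.exp (-(z.im * x.1)) := by
    intro z x
    rw [norm_mul, hw_norm, mul_one, Complex.norm_exp, hre]
  have hmeasF : ∀ z : ℂ,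
      AEStronglyMeasurable (fun x : ℝ × ZMod 2 => cexp (z * (x.1:ℂ) * I) * w x) μ := by
    intro z
    apply AEStronglyMeasurable.mul
    · apply Continuous.aestronglyMeasurable
      apply Complex.continuous_exp.comp
      continuity
    · exact hw_meas.aestronglyMeasurable
  have hintF : ∀ z : ℂ, Integrable (fun x : ℝ × ZMod 2 => cexp (z * (x.1:ℂ) * I) * w x) μ := by
    intro z
    apply Integrable.mono' (hinteg |z.im|) (hmeasF z)
    apply Filter.Eventually.of_forall
    intro x
    rw [habs, Real.exp_le_exp]
    calc -(z.im * x.1) ≤ |z.im * x.1| := neg_le_abs _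
      _ = |z.im| * |x.1| := abs_mul _ _
  have hdiffF : Differentiable ℂ F := by
    intro z₀
    have hkey := hasDerivAt_integral_of_dominated_loc_of_deriv_le (μ := μ)
      (F := fun (z : ℂ) (x : ℝ × ZMod 2) => cexp (z * (x.1:ℂ) * I) * w x)
      (F' := fun (z : ℂ) (x : ℝ × ZMod 2) => ((x.1:ℂ) * I) * (cexp (z * (x.1:ℂ) * I) * w x))
      (bound := fun x : ℝ × ZMod 2 => Real.exp ((|z₀.im| + 2) * |x.1|))
      (x₀ := z₀) (Metric.ball_mem_nhds z₀ one_pos)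
      (Filter.Eventually.of_forall fun z => hmeasF z)
      (hintF z₀)
      (by
        apply AEStronglyMeasurable.mul
        · apply Continuous.aestronglyMeasurable
          continuity
        · exact hmeasF z₀)
      (Filter.Eventually.of_forall fun x => by
        intro z hz
        have him : |z.im| ≤ |z₀.im| + 1 := by
          have h1 : |z.im - z₀.im| ≤ ‖z - z₀‖ := by
            rw [← Complex.sub_im]
            exact Complex.abs_im_le_norm _
          have h2 : ‖z - z₀‖ < 1 := by
            rw [← dist_eq_norm]
            exact Metric.mem_ball.mp hz
          have := abs_sub_abs_le_abs_sub z.im z₀.im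
          linarith
        rw [norm_mul, habs]
        have hn1 : ‖(x.1:ℂ) * I‖ = |x.1| := by
          rw [norm_mul, Complex.norm_I, mul_one,
            Complex.norm_real, Real.norm_eq_abs]
        rw [hn1]
        calc |x.1| * Real.exp (-(z.im * x.1))
            ≤ Real.exp |x.1| * Real.exp ((|z₀.im| + 1) * |x.1|) := by
              apply mul_le_mul
              · calc |x.1| ≤ |x.1| + 1 := by linarith
                  _ ≤ Real.exp |x.1| := Real.add_one_le_exp _
              · apply Real.exp_le_exp.mpr
                calc -(z.im * x.1) ≤ |z.im * x.1| := neg_le_abs _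
                  _ = |z.im| * |x.1| := abs_mul _ _
                  _ ≤ (|z₀.im| + 1) * |x.1| :=
                      mul_le_mul_of_nonneg_right him (abs_nonneg _)
              · exact (Real.exp_pos _).le
              · exact (Real.exp_pos _).le
          _ = Real.exp ((|z₀.im| + 2) * |x.1|) := by
              rw [← Real.exp_add]
              congr 1
              ring)
      (hinteg (|z₀.im| + 2))
      (Filter.Eventually.of_forall fun x => by
        intro z hz
        have h1 : HasDerivAt (fun z : ℂ => z * ((x.1:ℂ) * I)) ((x.1:ℂ) * I) z :=
          hasDerivAt_mul_const _
        have h2 := (h1.cexp).mul_const (w x)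
        have hfun : (fun z : ℂ => cexp (z * (x.1:ℂ) * I) * w x)
            = fun z : ℂ => cexp (z * ((x.1:ℂ) * I)) * w x := by
          funext y
          rw [mul_assoc]
        rw [hfun]
        convert h2 using 1
        · rfl
        rw [mul_assoc z]
        ring)
    exact hkey.2.differentiableAt
  have hGdiff : Differentiable ℂ (fun z : ℂ => cexp (-(P.eval z))) :=
    Differentiable.cexp (Differentiable.neg P.differentiable)
  have hfreq : ∃ᶠ z in nhdsWithin (0:ℂ) {z | z ≠ 0}, F z = cexp (-(P.eval z)) := by
    have htendR : Filter.Tendsto (fun n : ℕ => (1/((n:ℝ)+1) : ℝ)) Filter.atTop (nhds 0) :=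
      tendsto_one_div_add_atTop_nhds_zero_nat
    have htend : Filter.Tendsto (fun n : ℕ => ((1/((n:ℝ)+1) : ℝ) : ℂ)) Filter.atTop
        (nhdsWithin (0:ℂ) {z | z ≠ 0}) := by
      apply tendsto_nhdsWithin_of_tendsto_nhds_of_eventually_within
      · have h5 : Filter.Tendsto (fun n : ℕ => ((1/((n:ℝ)+1) : ℝ) : ℂ)) Filter.atTop
            (nhds ((0:ℝ):ℂ)) := (Complex.continuous_ofReal.tendsto 0).comp htendR
        simpa using h5
      · apply Filter.Eventually.of_forall
        intro n
        simp only [Set.mem_setOf_eq, ne_eq, Complex.ofReal_eq_zero]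
        positivity
    apply htend.frequently
    apply Filter.Frequently.of_forall
    intro n
    rw [hFs, h1]
  have hFG : F = fun z : ℂ => cexp (-(P.eval z)) :=
    AnalyticOnNhd.eq_of_frequently_eq
      (analyticOnNhd_univ_iff_differentiable.mpr hdiffF)
      (analyticOnNhd_univ_iff_differentiable.mpr hGdiff) hfreq
  have hlower : ∀ z : ℂ, -(σ * ‖z‖^2) ≤ (P.eval z).re := by
    intro z
    have hb1 : ‖F z‖ ≤ Real.exp (σ * z.im^2) := by
      rw [hF]
      calc ‖∫ x : ℝ × ZMod 2, cexp (z * (x.1:ℂ) * I) * w x ∂μ‖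
          ≤ ∫ x : ℝ × ZMod 2, ‖cexp (z * (x.1:ℂ) * I) * w x‖ ∂μ :=
            norm_integral_le_integral_norm _
        _ = ∫ x : ℝ × ZMod 2, Real.exp (-z.im * x.1) ∂μ := by
            congr 1
            funext x
            rw [habs]
            ring_nf
        _ = ∫ t : ℝ, Real.exp (-z.im * t) ∂ν := by
            rw [hνdef, integral_map measurable_fst.aemeasurable
              (Continuous.aestronglyMeasurable (by
                apply Real.continuous_exp.comp
                exact continuous_const.mul continuous_id))]
        _ ≤ Real.exp (σ * (-z.im)^2) := exp_integral_bound hσ hν (-z.im)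
        _ = Real.exp (σ * z.im^2) := by rw [neg_sq]
    have hb2 : ‖F z‖ = Real.exp ((-(P.eval z)).re) := by
      rw [hFG, Complex.norm_exp]
    rw [hb2, Real.exp_le_exp, Complex.neg_re] at hb1
    have him : z.im^2 ≤ ‖z‖^2 := by
      have h3 := Complex.abs_im_le_norm z
      nlinarith [norm_nonneg z, abs_nonneg z.im, _root_.sq_abs z.im]
    have h4 : σ * z.im^2 ≤ σ * ‖z‖^2 := mul_le_mul_of_nonneg_left him hσ
    linarith
  exact deg_le_two_of_re_lower_bound P σ hσ hlower
end

section
/- Let ψ : ℝ → ℂ be a continuous function satisfying Δ_h^{m} ψ(s) = 0 for all s, h ∈ ℝ, where Δ_h f(s) = f(s+h) − f(s) and m ≥ 1. Then ψ is a polynomial function of degree at most m − 1. -/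
open Finset Polynomial Function

/-- The finite difference operator `Δ_h f(s) = f(s+h) - f(s)`. -/
def fdiff (h : ℝ) (f : ℝ → ℂ) : ℝ → ℂ := fun s => f (s + h) - f s

/-- Candidate polynomial: Gregory–Newton interpolation of `ψ` along the arithmetic
progression with base `t` and step `h`. -/
noncomputable def nqq (ψ : ℝ → ℂ) (m : ℕ) (t h : ℝ) : Polynomial ℂ :=
  ∑ k ∈ Finset.range m,
    Polynomial.C ((fdiff h)^[k] ψ t / (k.factorial : ℂ)) *
      (descPochhammer ℂ k).comp (Polynomial.C ((h : ℂ))⁻¹ * (X - Polynomial.C (t : ℂ)))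

lemma key_sum (ψ : ℝ → ℂ) (m : ℕ) (hψ : ∀ h s : ℝ, (fdiff h)^[m] ψ s = 0)
    (h t : ℝ) (n : ℕ) :
    ψ (t + n * h) = ∑ k ∈ Finset.range m, (n.choose k : ℂ) * (fdiff h)^[k] ψ t := by
  have hzero : ∀ k, m ≤ k → (fdiff h)^[k] ψ t = 0 := by
    intro k hk
    obtain ⟨a, rfl⟩ := Nat.exists_eq_add_of_le hk
    rw [add_comm, Function.iterate_add_apply]
    have h0 : (fdiff h)^[m] ψ = fun _ => (0 : ℂ) := funext (hψ h)
    rw [h0, Function.iterate_fixed (_root_.funext fun _ => sub_self (0:ℂ)) a]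
  calc ψ (t + n*h)
      = ∑ k ∈ range (n+1), n.choose k • (fdiff h)^[k] ψ t := by
        rw [show (t + (n:ℝ)*h) = t + n • h by rw [nsmul_eq_mul]]
        exact shift_eq_sum_fwdDiff_iter h ψ n t
    _ = ∑ k ∈ range (max (n+1) m), n.choose k • (fdiff h)^[k] ψ t :=
        Finset.sum_subset (Finset.range_subset_range.2 (le_max_left _ _)) (fun k _ hk' => by
          simp only [Finset.mem_range] at hk'
          rw [Nat.choose_eq_zero_of_lt (by omega), zero_smul])
    _ = ∑ k ∈ range m, n.choose k • (fdiff h)^[k] ψ t :=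
        (Finset.sum_subset (Finset.range_subset_range.2 (le_max_right _ _)) (fun k _ hk' => by
          simp only [Finset.mem_range] at hk'
          rw [hzero k (by omega), smul_zero])).symm
    _ = ∑ k ∈ range m, (n.choose k : ℂ) * (fdiff h)^[k] ψ t := by
        simp [nsmul_eq_mul]

lemma key_eval (ψ : ℝ → ℂ) (m : ℕ) (hψ : ∀ h s : ℝ, (fdiff h)^[m] ψ s = 0)
    (h t : ℝ) (hne : h ≠ 0) (n : ℕ) :
    (nqq ψ m t h).eval ((t + n * h : ℝ) : ℂ) = ψ (t + n * h) := by
  rw [key_sum ψ m hψ h t n, nqq, eval_finset_sum]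
  refine Finset.sum_congr rfl fun k _ => ?_
  rw [eval_mul, eval_C, eval_comp, eval_mul, eval_C, eval_sub, eval_X, eval_C]
  have hC : (h:ℂ) ≠ 0 := Complex.ofReal_ne_zero.2 hne
  have h1 : ((h:ℂ))⁻¹ * (((t + n * h : ℝ):ℂ) - (t:ℂ)) = (n : ℂ) := by
    push_cast
    field_simp
    ring
  rw [h1, descPochhammer_eval_eq_descFactorial]
  have hfac : (k.factorial : ℂ) ≠ 0 := Nat.cast_ne_zero.2 k.factorial_ne_zero
  rw [Nat.descFactorial_eq_factorial_mul_choose]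
  push_cast
  field_simp

lemma nqq_natDegree_lt (ψ : ℝ → ℂ) (m : ℕ) (hm : 1 ≤ m) (t h : ℝ) :
    (nqq ψ m t h).natDegree < m := by
  have : (nqq ψ m t h).natDegree ≤ m - 1 := by
    apply Polynomial.natDegree_sum_le_of_forall_le
    intro k hk
    simp only [Finset.mem_range] at hk
    calc (Polynomial.C ((fdiff h)^[k] ψ t / (k.factorial : ℂ)) *
          (descPochhammer ℂ k).comp (Polynomial.C ((h : ℂ))⁻¹ * (X - Polynomial.C (t : ℂ)))).natDegree
        ≤ ((descPochhammer ℂ k).comp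
            (Polynomial.C ((h : ℂ))⁻¹ * (X - Polynomial.C (t : ℂ)))).natDegree :=
          natDegree_C_mul_le _ _
      _ ≤ (descPochhammer ℂ k).natDegree *
            (Polynomial.C ((h : ℂ))⁻¹ * (X - Polynomial.C (t : ℂ))).natDegree :=
          natDegree_comp_le
      _ ≤ k * 1 := by
          apply Nat.mul_le_mul
          · rw [descPochhammer_natDegree]
          · exact (natDegree_C_mul_le _ _).trans (natDegree_X_sub_C_le _)
      _ ≤ m - 1 := by omega
  omega

theorem stmt_6 (ψ : ℝ → ℂ) (hcont : Continuous ψ) (m : ℕ) (hm : 1 ≤ m)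
    (hψ : ∀ h s : ℝ, (fdiff h)^[m] ψ s = 0) :
    ∃ c : Fin m → ℂ, ∀ s : ℝ, ψ s = ∑ k : Fin m, c k * (s : ℂ) ^ (k : ℕ) := by
  set p : Polynomial ℂ := nqq ψ m 0 1 with hp
  -- `p` agrees with `ψ` on the naturals
  have hpnat : ∀ j : ℕ, p.eval ((j:ℕ) : ℂ) = ψ j := by
    intro j
    have := key_eval ψ m hψ 1 0 one_ne_zero j
    rw [show ((0:ℝ) + (j:ℝ)*1) = (j:ℝ) by ring] at this
    simpa using this
  -- all the interpolating polynomials on progressions `-M + n/N` coincide with `p`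
  have hA : ∀ (M N : ℕ), 0 < N → nqq ψ m (-(M:ℝ)) ((N:ℝ)⁻¹) = p := by
    intro M N hN
    apply Polynomial.eq_of_infinite_eval_eq
    apply Set.infinite_of_injective_forall_mem (f := (Nat.cast : ℕ → ℂ)) Nat.cast_injective
    intro j
    simp only [Set.mem_setOf_eq]
    have hNne : ((N:ℝ))⁻¹ ≠ 0 := inv_ne_zero (Nat.cast_ne_zero.2 hN.ne')
    have := key_eval ψ m hψ ((N:ℝ)⁻¹) (-(M:ℝ)) hNne (N*(j+M))
    have e2 : (-(M:ℝ) + ((N*(j+M):ℕ):ℝ) * ((N:ℝ))⁻¹) = (j:ℝ) := by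
      have : ((N:ℝ)) ≠ 0 := Nat.cast_ne_zero.2 hN.ne'
      push_cast
      field_simp
      ring
    rw [e2] at this
    rw [show ((j:ℕ) : ℂ) = (((j:ℝ)) : ℂ) by push_cast; ring, this]
    have := hpnat j
    rw [show ((j:ℕ) : ℂ) = (((j:ℝ)) : ℂ) by push_cast; ring] at this
    exact this.symm
  -- `p` agrees with `ψ` on the rationals
  have hQ : ∀ q : ℚ, ψ (q:ℝ) = p.eval (((q:ℝ)) : ℂ) := by
    intro q
    set M : ℕ := q.num.natAbs with hM
    set N : ℕ := q.den with hN
    have hNpos : 0 < N := q.pos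
    have hnonneg : (0:ℤ) ≤ q.num + M * N := by
      have h1 : (M:ℤ) = |q.num| := (Int.abs_eq_natAbs q.num).symm
      have h2 : (1:ℤ) ≤ N := by exact_mod_cast hNpos
      nlinarith [abs_nonneg q.num, neg_abs_le q.num]
    set n : ℕ := (q.num + M * N).toNat with hn
    have hnz : (n : ℤ) = q.num + M * N := Int.toNat_of_nonneg hnonneg
    have hNne : ((N:ℝ)) ≠ 0 := Nat.cast_ne_zero.2 hNpos.ne'
    have e3 : (-(M:ℝ) + (n:ℝ) * ((N:ℝ))⁻¹) = (q:ℝ) := by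
      have hnr : (n:ℝ) = (q.num:ℝ) + (M:ℝ) * (N:ℝ) := by exact_mod_cast hnz
      rw [hnr, Rat.cast_def]
      field_simp
      rw [hN]
      ring
    have := key_eval ψ m hψ ((N:ℝ)⁻¹) (-(M:ℝ)) (inv_ne_zero hNne) n
    rw [e3, hA M N hNpos] at this
    exact this.symm
  -- conclude by continuity and density of the rationals
  have hfun : ψ = fun s : ℝ => p.eval ((s:ℝ) : ℂ) := by
    apply Continuous.ext_on (Rat.denseRange_cast (𝕜 := ℝ)) hcont
      (p.continuous.comp Complex.continuous_ofReal)
    rintro x ⟨q, rfl⟩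
    exact hQ q
  have hdeg : p.natDegree < m := nqq_natDegree_lt ψ m hm 0 1
  refine ⟨fun k => p.coeff k, fun s => ?_⟩
  have := congrFun hfun s
  rw [this, Polynomial.eval_eq_sum_range' hdeg,
    ← Fin.sum_univ_eq_sum_range (fun k => p.coeff k * ((s:ℝ):ℂ) ^ k) m]
end

section
/- Let ξ₁, ξ₂ be independent random variables with values in ℤ/2ℤ with distributions μ₁, μ₂ whose characteristic functions do not vanish. Let a_j, b_j, c_j, d_j ∈ ℤ/2ℤ (acting by multiplication as endomorphisms), and set L₁ = a₁ξ₁ + a₂ξ₂, L₂ = b₁ξ₁ + b₂ξ₂, L₃ = c₁ξ₁ + c₂ξ₂, L₄ = d₁ξ₁ + d₂ξ₂. If (L₁,L₂) and (L₃,L₄) are identically distributed, then for each i such that a_i d_j − b_i c_j = 1 in ℤ/2ℤ for all j ∈ {1,2}, the distribution μ_i is degenerate (concentrated at a single point of ℤ/2ℤ). -/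
open MeasureTheory

/-- The characteristic function of a distribution on `ℤ/2ℤ`:
`μ̂(l) = Σ_k (−1)^{kl} μ({k})`. -/
noncomputable def zcharFun (μ : Measure (ZMod 2)) (l : ZMod 2) : ℂ :=
  ∑ k : ZMod 2, ((-1 : ℂ) ^ (k * l).val) * ((μ {k}).toReal : ℂ)


/-- real version of the characteristic function -/
noncomputable def rchar (μ : Measure (ZMod 2)) (l : ZMod 2) : ℝ :=
  ∑ k : ZMod 2, ((-1 : ℝ) ^ (k * l).val) * (μ {k}).toReal

lemma zchar_eq_rchar (μ : Measure (ZMod 2)) (l : ZMod 2) :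
    zcharFun μ l = ((rchar μ l : ℝ) : ℂ) := by
  simp [zcharFun, rchar]

lemma univ_eq : (Finset.univ : Finset (ZMod 2)) = {0, 1} := by decide

lemma sum_zmod (f : ZMod 2 → ℝ) : ∑ x : ZMod 2, f x = f 0 + f 1 := by
  rw [univ_eq, Finset.sum_insert (by decide), Finset.sum_singleton]

lemma meas_sum (μ : Measure (ZMod 2)) [IsProbabilityMeasure μ] :
    (μ {0}).toReal + (μ {1}).toReal = 1 := by
  have h : μ {0} + μ {1} = 1 := by
    rw [← measure_union (by simp) (measurableSet_singleton 1),
      show ({0} ∪ {1} : Set (ZMod 2)) = Set.univ from by ext x; revert x; decide]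
    exact measure_univ
  have h0 : μ {0} ≠ ⊤ := measure_ne_top μ _
  have h1 : μ {1} ≠ ⊤ := measure_ne_top μ _
  rw [← ENNReal.toReal_add h0 h1, h]
  simp

lemma rchar_zero (μ : Measure (ZMod 2)) [IsProbabilityMeasure μ] : rchar μ 0 = 1 := by
  rw [rchar, sum_zmod (fun k => ((-1 : ℝ) ^ (k * 0).val) * (μ {k}).toReal)]
  simp only [mul_zero, zero_mul]
  norm_num [meas_sum μ]

lemma rchar_one (μ : Measure (ZMod 2)) :
    rchar μ 1 = (μ {0}).toReal - (μ {1}).toReal := by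
  rw [rchar, sum_zmod (fun k => ((-1 : ℝ) ^ (k * 1).val) * (μ {k}).toReal)]
  norm_num [show ((0:ZMod 2)*1).val = 0 from rfl, show ((1:ZMod 2)*1).val = 1 from rfl,
    show (ZMod.val (1 : ZMod 2)) = 1 from rfl]
  ring

lemma rchar_pow (μ : Measure (ZMod 2)) [IsProbabilityMeasure μ] (x : ZMod 2) :
    rchar μ x = (rchar μ 1) ^ x.val := by
  rcases (show x = 0 ∨ x = 1 from by revert x; decide) with rfl | rfl
  · simp [rchar_zero, show (ZMod.val (0 : ZMod 2)) = 0 from rfl]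
  · simp [show (ZMod.val (1 : ZMod 2)) = 1 from rfl]

lemma rchar_sq_le (μ : Measure (ZMod 2)) [IsProbabilityMeasure μ] : (rchar μ 1) ^ 2 ≤ 1 := by
  have h := meas_sum μ
  have h0 : 0 ≤ (μ {0}).toReal := ENNReal.toReal_nonneg
  have h1 : 0 ≤ (μ {1}).toReal := ENNReal.toReal_nonneg
  rw [rchar_one]
  nlinarith

lemma fin1 {F : ℝ} (h : F = 1) : F ^ 2 = 1 := by rw [h]; norm_num

lemma fin2 {F G : ℝ} (hF2 : F ^ 2 ≤ 1) (hG2 : G ^ 2 ≤ 1) (h : F * G = 1) : F ^ 2 = 1 := by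
  nlinarith [sq_nonneg (F - G), sq_nonneg (F + G)]

lemma fin3 {F G : ℝ} (hG : G ≠ 0) (h : F * G = G) : F ^ 2 = 1 := by
  have hF : F = 1 := by
    have := mul_right_cancel₀ hG (h.trans (one_mul G).symm)
    exact this
  rw [hF]; norm_num

set_option maxHeartbeats 2000000 in
lemma core (F G : ℝ) (hF : F ≠ 0) (hG : G ≠ 0) (hF2 : F ^ 2 ≤ 1) (hG2 : G ^ 2 ≤ 1)
    (a₁ a₂ b₁ b₂ c₁ c₂ d₁ d₂ : ZMod 2)
    (H : ∀ s t : ZMod 2, F ^ ((s*a₁+t*b₁).val) * G ^ ((s*a₂+t*b₂).val)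
        = F ^ ((s*c₁+t*d₁).val) * G ^ ((s*c₂+t*d₂).val))
    (h1 : a₁*d₁ - b₁*c₁ = 1) (h2 : a₁*d₂ - b₁*c₂ = 1) : F ^ 2 = 1 := by
  have h10 := H 1 0
  have h01 := H 0 1
  have h11 := H 1 1
  clear H hF
  have e : ∀ x : ZMod 2, x = 0 ∨ x = 1 := by decide
  rcases e a₁ with rfl|rfl <;> rcases e b₁ with rfl|rfl <;>
    rcases e c₁ with rfl|rfl <;> rcases e c₂ with rfl|rfl <;>
    rcases e d₁ with rfl|rfl <;> rcases e d₂ with rfl|rfl <;>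
  first
  | exact absurd h1 (by decide)
  | exact absurd h2 (by decide)
  | (clear h1 h2
     rcases e a₂ with rfl|rfl <;> rcases e b₂ with rfl|rfl <;> clear e <;>
     simp only [one_mul, zero_mul, mul_one, mul_zero, add_zero, zero_add,
      show ((0:ZMod 2)).val = 0 from rfl, show ((1:ZMod 2)).val = 1 from rfl,
      show ((1:ZMod 2)+1).val = 0 from rfl, pow_zero, pow_one] at h10 h01 h11 <;>
     first
     | exact fin1 h10 | exact fin1 h01 | exact fin1 h11
     | exact fin2 hF2 hG2 h10 | exact fin2 hF2 hG2 h10.symm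
     | exact fin2 hF2 hG2 h01 | exact fin2 hF2 hG2 h01.symm
     | exact fin2 hF2 hG2 h11 | exact fin2 hF2 hG2 h11.symm
     | exact fin3 hG h10 | exact fin3 hG h10.symm
     | exact fin3 hG h01 | exact fin3 hG h01.symm
     | exact fin3 hG h11 | exact fin3 hG h11.symm)

lemma phi_add (x y : ZMod 2) :
    ((-1:ℝ) ^ ((x + y).val)) = ((-1:ℝ) ^ x.val) * ((-1:ℝ) ^ y.val) := by
  have e : ∀ z : ZMod 2, z = 0 ∨ z = 1 := by decide
  rcases e x with rfl|rfl <;> rcases e y with rfl|rfl <;>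
    norm_num [show ((0:ZMod 2)).val = 0 from rfl, show ((1:ZMod 2)).val = 1 from rfl,
      show ((1:ZMod 2)+1).val = 0 from rfl, show ((2:ZMod 2)).val = 0 from rfl]

lemma degenerate_of (μ : Measure (ZMod 2)) [IsProbabilityMeasure μ]
    (h : (rchar μ 1) ^ 2 = 1) : ∃ x : ZMod 2, μ = Measure.dirac x := by
  have hs := meas_sum μ
  have h0 : 0 ≤ (μ {0}).toReal := ENNReal.toReal_nonneg
  have h1 : 0 ≤ (μ {1}).toReal := ENNReal.toReal_nonneg
  rw [rchar_one] at h
  have hz : (μ {0}).toReal = 0 ∨ (μ {1}).toReal = 0 := by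
    rcases mul_eq_zero.mp (by nlinarith : (μ {0}).toReal * (μ {1}).toReal = 0) with h'|h'
    · exact Or.inl h'
    · exact Or.inr h'
  have e : ∀ z : ZMod 2, z = 0 ∨ z = 1 := by decide
  have key : ∀ x y : ZMod 2, x ≠ y → (μ {x}).toReal = 0 → μ = Measure.dirac y := by
    intro x y hxy hx
    have hx0 : μ {x} = 0 := by
      rcases ENNReal.toReal_eq_zero_iff _ |>.mp hx with h'|h'
      · exact h'
      · exact absurd h' (measure_ne_top μ _)
    have huniv : ({x} ∪ {y} : Set (ZMod 2)) = Set.univ := by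
      ext z
      rcases e x with rfl|rfl <;> rcases e y with rfl|rfl <;> rcases e z with rfl|rfl <;>
        simp_all
    have hy1 : μ {y} = 1 := by
      have hu : μ {x} + μ {y} = 1 := by
        rw [← measure_union (by simpa using hxy) (measurableSet_singleton y), huniv]
        exact measure_univ
      rwa [hx0, zero_add] at hu
    apply Measure.ext_of_singleton
    intro a
    rcases e a with rfl|rfl <;> rcases e x with rfl|rfl <;> rcases e y with rfl|rfl <;>
      simp_all [Measure.dirac_apply']
  rcases hz with h'|h'
  · exact ⟨1, key 0 1 (by decide) h'⟩
  · exact ⟨0, key 1 0 (by decide) h'⟩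

lemma integral_phi {Ω : Type*} [MeasurableSpace Ω] (P : Measure Ω) [IsProbabilityMeasure P]
    (ξ : Ω → ZMod 2) (hm : Measurable ξ) (α : ZMod 2) :
    ∫ ω, ((-1:ℝ) ^ ((α * ξ ω).val)) ∂P = rchar (P.map ξ) α := by
  have : IsProbabilityMeasure (P.map ξ) := Measure.isProbabilityMeasure_map hm.aemeasurable
  rw [← integral_map (f := fun x : ZMod 2 => ((-1:ℝ) ^ ((α * x).val))) hm.aemeasurable
      (measurable_of_countable _).aestronglyMeasurable,
    integral_fintype Integrable.of_finite, rchar]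
  refine Finset.sum_congr rfl fun k _ => ?_
  rw [smul_eq_mul, mul_comm, mul_comm α k, Measure.real_def]

lemma char_id {Ω : Type*} [MeasurableSpace Ω] (P : Measure Ω) [IsProbabilityMeasure P]
    (ξ₁ ξ₂ : Ω → ZMod 2) (hm1 : Measurable ξ₁) (hm2 : Measurable ξ₂)
    (hind : ProbabilityTheory.IndepFun ξ₁ ξ₂ P)
    (a₁ a₂ b₁ b₂ : ZMod 2) (s t : ZMod 2) :
    ∫ p : ZMod 2 × ZMod 2, ((-1:ℝ) ^ ((s * p.1 + t * p.2).val))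
        ∂(P.map (fun ω => (a₁ * ξ₁ ω + a₂ * ξ₂ ω, b₁ * ξ₁ ω + b₂ * ξ₂ ω)))
      = rchar (P.map ξ₁) (s * a₁ + t * b₁) * rchar (P.map ξ₂) (s * a₂ + t * b₂) := by
  have hmf : Measurable (fun ω => (a₁ * ξ₁ ω + a₂ * ξ₂ ω, b₁ * ξ₁ ω + b₂ * ξ₂ ω)) :=
    (measurable_of_countable
      (fun p : ZMod 2 × ZMod 2 => (a₁ * p.1 + a₂ * p.2, b₁ * p.1 + b₂ * p.2))).comp
      (hm1.prodMk hm2)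
  rw [integral_map hmf.aemeasurable (measurable_of_countable _).aestronglyMeasurable]
  have heq : ∀ ω, ((-1:ℝ) ^ ((s * (a₁ * ξ₁ ω + a₂ * ξ₂ ω) + t * (b₁ * ξ₁ ω + b₂ * ξ₂ ω)).val))
      = ((-1:ℝ) ^ (((s * a₁ + t * b₁) * ξ₁ ω).val)) * ((-1:ℝ) ^ (((s * a₂ + t * b₂) * ξ₂ ω).val)) := by
    intro ω
    rw [show s * (a₁ * ξ₁ ω + a₂ * ξ₂ ω) + t * (b₁ * ξ₁ ω + b₂ * ξ₂ ω)
        = (s * a₁ + t * b₁) * ξ₁ ω + (s * a₂ + t * b₂) * ξ₂ ω from by ring, phi_add]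
  simp_rw [heq]
  have hXY : ProbabilityTheory.IndepFun
      ((fun x : ZMod 2 => ((-1:ℝ) ^ (((s * a₁ + t * b₁) * x).val))) ∘ ξ₁)
      ((fun x : ZMod 2 => ((-1:ℝ) ^ (((s * a₂ + t * b₂) * x).val))) ∘ ξ₂) P :=
    hind.comp (measurable_of_countable _) (measurable_of_countable _)
  have hmul := hXY.integral_mul_eq_mul_integral
    (((measurable_of_countable _).comp hm1).aestronglyMeasurable)
    (((measurable_of_countable _).comp hm2).aestronglyMeasurable)
  rw [show (∫ ω, ((-1:ℝ) ^ (((s * a₁ + t * b₁) * ξ₁ ω).val)) * ((-1:ℝ) ^ (((s * a₂ + t * b₂) * ξ₂ ω).val)) ∂P)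
      = ∫ ω, (((fun x : ZMod 2 => ((-1:ℝ) ^ (((s * a₁ + t * b₁) * x).val))) ∘ ξ₁)
        * ((fun x : ZMod 2 => ((-1:ℝ) ^ (((s * a₂ + t * b₂) * x).val))) ∘ ξ₂)) ω ∂P from rfl]
  rw [hmul]
  exact congrArg₂ HMul.hMul (integral_phi P ξ₁ hm1 _) (integral_phi P ξ₂ hm2 _)

theorem stmt_7 {Ω : Type*} [MeasurableSpace Ω] (P : Measure Ω) [IsProbabilityMeasure P]
    (ξ₁ ξ₂ : Ω → ZMod 2) (hm1 : Measurable ξ₁) (hm2 : Measurable ξ₂)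
    (hind : ProbabilityTheory.IndepFun ξ₁ ξ₂ P)
    (hnv1 : ∀ l, zcharFun (P.map ξ₁) l ≠ 0) (hnv2 : ∀ l, zcharFun (P.map ξ₂) l ≠ 0)
    (a₁ a₂ b₁ b₂ c₁ c₂ d₁ d₂ : ZMod 2)
    (hid : P.map (fun ω => (a₁ * ξ₁ ω + a₂ * ξ₂ ω, b₁ * ξ₁ ω + b₂ * ξ₂ ω)) =
           P.map (fun ω => (c₁ * ξ₁ ω + c₂ * ξ₂ ω, d₁ * ξ₁ ω + d₂ * ξ₂ ω))) :
    ((a₁ * d₁ - b₁ * c₁ = 1 ∧ a₁ * d₂ - b₁ * c₂ = 1) →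
      ∃ x : ZMod 2, P.map ξ₁ = Measure.dirac x) ∧
    ((a₂ * d₁ - b₂ * c₁ = 1 ∧ a₂ * d₂ - b₂ * c₂ = 1) →
      ∃ x : ZMod 2, P.map ξ₂ = Measure.dirac x) := by
  have i1 : IsProbabilityMeasure (P.map ξ₁) := Measure.isProbabilityMeasure_map hm1.aemeasurable
  have i2 : IsProbabilityMeasure (P.map ξ₂) := Measure.isProbabilityMeasure_map hm2.aemeasurable
  have hr1 : ∀ l, rchar (P.map ξ₁) l ≠ 0 := fun l hl => hnv1 l (by
    rw [zchar_eq_rchar, hl]; norm_num)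
  have hr2 : ∀ l, rchar (P.map ξ₂) l ≠ 0 := fun l hl => hnv2 l (by
    rw [zchar_eq_rchar, hl]; norm_num)
  set F := rchar (P.map ξ₁) 1 with hF
  set G := rchar (P.map ξ₂) 1 with hG
  have key : ∀ s t : ZMod 2,
      F ^ ((s*a₁+t*b₁).val) * G ^ ((s*a₂+t*b₂).val)
        = F ^ ((s*c₁+t*d₁).val) * G ^ ((s*c₂+t*d₂).val) := by
    intro s t
    have h1 := char_id P ξ₁ ξ₂ hm1 hm2 hind a₁ a₂ b₁ b₂ s t
    have h2 := char_id P ξ₁ ξ₂ hm1 hm2 hind c₁ c₂ d₁ d₂ s t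
    rw [hid] at h1
    have h3 := h1.symm.trans h2
    rwa [rchar_pow (P.map ξ₁) (s*a₁+t*b₁), rchar_pow (P.map ξ₂) (s*a₂+t*b₂),
      rchar_pow (P.map ξ₁) (s*c₁+t*d₁), rchar_pow (P.map ξ₂) (s*c₂+t*d₂)] at h3
  have key' : ∀ s t : ZMod 2,
      G ^ ((s*a₂+t*b₂).val) * F ^ ((s*a₁+t*b₁).val)
        = G ^ ((s*c₂+t*d₂).val) * F ^ ((s*c₁+t*d₁).val) := by
    intro s t
    linear_combination key s t
  constructor
  · rintro ⟨h1, h2⟩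
    exact degenerate_of _ (core F G (hr1 1) (hr2 1) (rchar_sq_le _) (rchar_sq_le _)
      a₁ a₂ b₁ b₂ c₁ c₂ d₁ d₂ key h1 h2)
  · rintro ⟨h1, h2⟩
    exact degenerate_of _ (core G F (hr2 1) (hr1 1) (rchar_sq_le _) (rchar_sq_le _)
      a₂ a₁ b₂ b₁ c₂ c₁ d₂ d₁ key' h2 h1)
end

section
/- There exist independent random variables ξ₁, ξ₂ with values in ℤ/2ℤ with distributions μ₁, μ₂, and elements a_j, b_j, c_j, d_j ∈ ℤ/2ℤ (j = 1, 2) such that, setting L₁ = a₁ξ₁+a₂ξ₂, L₂ = b₁ξ₁+b₂ξ₂, L₃ = c₁ξ₁+c₂ξ₂, L₄ = d₁ξ₁+d₂ξ₂, the vectors (L₁,L₂) and (L₃,L₄) are identically distributed, a₁d_j − b₁c_j = 1 for all j ∈ {1,2}, yet μ₁ is neither a Dirac measure nor the uniform (Haar) measure on ℤ/2ℤ. -/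
open MeasureTheory

noncomputable def mu1 : Measure (ZMod 2) :=
  (4 : ENNReal)⁻¹ • Measure.dirac 0 + (3/4 : ENNReal) • Measure.dirac 1

noncomputable def mu2 : Measure (ZMod 2) := (2 : ENNReal)⁻¹ • Measure.count

instance : IsProbabilityMeasure mu1 := by
  constructor
  simp [mu1]
  rw [ENNReal.div_eq_inv_mul]
  rw [show (4:ENNReal)⁻¹ + 4⁻¹*3 = 4⁻¹*4 by ring]
  exact ENNReal.inv_mul_cancel (by norm_num) (by norm_num)

instance : IsProbabilityMeasure mu2 := by
  constructor
  simp [mu2, Measure.count_apply, Set.encard_univ]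
  rw [ENNReal.inv_mul_cancel] <;> simp [Nat.card_eq_fintype_card]

theorem stmt_8 : ∃ (Ω : Type) (_ : MeasurableSpace Ω) (P : Measure Ω),
    IsProbabilityMeasure P ∧
    ∃ (ξ₁ ξ₂ : Ω → ZMod 2) (a₁ a₂ b₁ b₂ c₁ c₂ d₁ d₂ : ZMod 2),
      Measurable ξ₁ ∧ Measurable ξ₂ ∧ ProbabilityTheory.IndepFun ξ₁ ξ₂ P ∧
      P.map (fun ω => (a₁ * ξ₁ ω + a₂ * ξ₂ ω, b₁ * ξ₁ ω + b₂ * ξ₂ ω)) =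
        P.map (fun ω => (c₁ * ξ₁ ω + c₂ * ξ₂ ω, d₁ * ξ₁ ω + d₂ * ξ₂ ω)) ∧
      (a₁ * d₁ - b₁ * c₁ = 1 ∧ a₁ * d₂ - b₁ * c₂ = 1) ∧
      (¬ ∃ x : ZMod 2, P.map ξ₁ = Measure.dirac x) ∧
      P.map ξ₁ ≠ (2 : ENNReal)⁻¹ • Measure.count := by
  refine ⟨ZMod 2 × ZMod 2, inferInstance, mu1.prod mu2, inferInstance,
    Prod.fst, Prod.snd, 1, 0, 0, 1, 1, 0, 1, 1,
    measurable_fst, measurable_snd, ?_, ?_, ⟨by decide, by decide⟩, ?_, ?_⟩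
  · rw [ProbabilityTheory.indepFun_iff_measure_inter_preimage_eq_mul]
    intro s t hs ht
    rw [← Set.prod_eq, Measure.prod_prod]
    have h1 : (mu1.prod mu2) (Prod.fst ⁻¹' s) = mu1 s := by
      rw [← Set.prod_univ, Measure.prod_prod, measure_univ, mul_one]
    have h2 : (mu1.prod mu2) (Prod.snd ⁻¹' t) = mu2 t := by
      rw [← Set.univ_prod, Measure.prod_prod, measure_univ, one_mul]
    rw [h1, h2]
  · simp only [one_mul, zero_mul, add_zero, zero_add]
    have hsing : ∀ x : ZMod 2, mu2 {x} = 2⁻¹ := by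
      intro x; simp [mu2, Measure.count_singleton]
    apply Measure.ext_of_singleton
    rintro ⟨u, v⟩
    rw [Measure.map_apply (by fun_prop) (measurableSet_singleton _),
        Measure.map_apply (by fun_prop) (measurableSet_singleton _)]
    have h1 : (fun ω : ZMod 2 × ZMod 2 => (ω.1, ω.2)) ⁻¹' {(u, v)} = {u} ×ˢ {v} := by
      ext ⟨x, y⟩; simp [Prod.ext_iff]
    have key : ∀ u v x y : ZMod 2, (x = u ∧ x + y = v) ↔ (x = u ∧ y = u + v) := by decide
    have h2 : (fun ω : ZMod 2 × ZMod 2 => (ω.1, ω.1 + ω.2)) ⁻¹' {(u, v)} = {u} ×ˢ {u + v} := by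
      ext ⟨x, y⟩
      simp only [Set.mem_preimage, Set.mem_singleton_iff, Prod.ext_iff, Set.mem_prod]
      exact key u v x y
    rw [h1, h2, Measure.prod_prod, Measure.prod_prod, hsing, hsing]
  · rw [Measure.map_fst_prod, measure_univ, one_smul]
    rintro ⟨x, hx⟩
    have := congrArg (fun m : Measure (ZMod 2) => m {0}) hx
    fin_cases x
    · change mu1 {0} = Measure.dirac (0 : ZMod 2) {0} at this
      simp [mu1, Measure.dirac_apply'] at this
    · change mu1 {0} = Measure.dirac (1 : ZMod 2) {0} at this
      simp [mu1, Measure.dirac_apply'] at this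
  · rw [Measure.map_fst_prod, measure_univ, one_smul]
    intro hx
    have := congrArg (fun m : Measure (ZMod 2) => m {0}) hx
    simp [mu1, Measure.dirac_apply', Measure.count_singleton] at this
end

section
/- Let μ be a probability measure on ℝ × ℤ/2ℤ with μ̂(s,0) = exp(−σs² + iβs) and μ̂(s,1) = κ·exp(−σ's² + iβ's) for all s ∈ ℝ, where σ, σ' ≥ 0, β, β', κ ∈ ℝ, κ ≠ 0, and σ' ≥ σ. Then σ = σ' and β = β'. -/
open MeasureTheory

open Complex

lemma gauss1 {c : ℝ} (hc : 0 < c) (r : ℝ) :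
    ∫ s : ℝ, Complex.exp (-(c:ℂ) * s^2 + Complex.I * s * r)
      = (Real.sqrt (Real.pi / c) : ℂ) * Complex.exp (-((r:ℂ))^2 / (4*c)) := by
  have h := fourierIntegral_gaussian (b := (c:ℂ)) (by simpa using hc) (r : ℂ)
  have h2 : ∀ s : ℝ, Complex.exp (-(c:ℂ) * s^2 + Complex.I * s * r)
      = Complex.exp (Complex.I * r * s) * Complex.exp (-(c:ℂ) * s^2) := by
    intro s; rw [← Complex.exp_add]; ring_nf
  simp_rw [h2, h]
  congr 1
  rw [show ((Real.pi : ℂ) / c) = ((Real.pi / c : ℝ) : ℂ) by push_cast; ring,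
    Real.sqrt_eq_rpow, Complex.ofReal_cpow (by positivity)]
  norm_num

lemma key (μ : Measure (ℝ × ZMod 2)) [IsProbabilityMeasure μ] (l : ZMod 2)
    (c b : ℝ) (C : ℂ) (hc : 0 ≤ c)
    (h : ∀ s : ℝ, charFun2 μ (s, l) = C * Complex.exp (-(c:ℂ) * s^2 + (b:ℂ) * s * Complex.I))
    (ε a : ℝ) (hε : 0 < ε) :
    (Real.sqrt (Real.pi/ε) : ℂ) *
        ∫ x, (Real.exp (-(x.1-a)^2/(4*ε)) : ℂ) * (-1:ℂ)^((x.2*l).val) ∂μ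
      = C * (Real.sqrt (Real.pi/(c+ε)) : ℂ)
          * Complex.exp (-(((b-a : ℝ)):ℂ)^2 / (4*(c+ε))) := by
  set f : ℝ → (ℝ × ZMod 2) → ℂ := fun s x =>
    Complex.exp (-(ε:ℂ) * s^2 + Complex.I * s * (-a)) * pairing x (s, l) with hf
  have hmeas : AEStronglyMeasurable (Function.uncurry f) (volume.prod μ) := by
    have m1 : Measurable fun p : ℝ × (ℝ × ZMod 2) =>
        Complex.exp (-(ε:ℂ) * p.1^2 + Complex.I * p.1 * (-a)) := by fun_prop
    have m2 : Measurable fun p : ℝ × (ℝ × ZMod 2) =>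
        Complex.exp ((p.1 : ℂ) * (p.2.1 : ℂ) * Complex.I) := by fun_prop
    have m3 : Measurable fun p : ℝ × (ℝ × ZMod 2) => ((-1 : ℂ) ^ (p.2.2 * l).val) :=
      (measurable_from_top (f := fun k : ZMod 2 => ((-1 : ℂ) ^ (k * l).val))).comp
        (measurable_snd.comp measurable_snd)
    exact ((m1.mul (m2.mul m3)).aestronglyMeasurable).congr (by
      refine Filter.EventuallyEq.of_eq (funext fun p => ?_)
      simp [Function.uncurry, hf, pairing, mul_assoc])
  have hnorm : ∀ p : ℝ × (ℝ × ZMod 2), ‖Function.uncurry f p‖ = Real.exp (-ε * p.1^2) := by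
    intro p
    simp only [Function.uncurry, hf, pairing, norm_mul, Complex.norm_exp, norm_pow, norm_neg,
      norm_one, one_pow, mul_one]
    simp [← Complex.ofReal_pow]
  have hint : Integrable (Function.uncurry f) (volume.prod μ) := by
    have hd : Integrable (fun p : ℝ × (ℝ × ZMod 2) => Real.exp (-ε * p.1^2) * 1)
        (volume.prod μ) :=
      Integrable.mul_prod (integrable_exp_neg_mul_sq hε) (integrable_const 1)
    refine (hd.mono' hmeas ?_)
    filter_upwards with p
    rw [hnorm p]; simp
  have comb1 : ∀ s : ℝ, Complex.exp (-(ε:ℂ) * s^2 + Complex.I * s * (-a)) *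
      (C * Complex.exp (-(c:ℂ) * s^2 + (b:ℂ) * s * Complex.I))
      = C * Complex.exp (-(((c+ε):ℝ):ℂ) * s^2 + Complex.I * s * ((b - a : ℝ):ℂ)) := by
    intro s
    rw [mul_comm, mul_assoc, ← Complex.exp_add]
    congr 2
    push_cast; ring
  have outer : ∫ s : ℝ, (∫ x, f s x ∂μ)
      = C * (Real.sqrt (Real.pi/(c+ε)) : ℂ)
          * Complex.exp (-(((b-a : ℝ)):ℂ)^2 / (4*(c+ε))) := by
    have e1 : ∀ s : ℝ, ∫ x, f s x ∂μ
        = Complex.exp (-(ε:ℂ) * s^2 + Complex.I * s * (-a)) * charFun2 μ (s, l) := by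
      intro s
      rw [hf, charFun2]
      exact integral_const_mul _ _
    simp_rw [e1, h, comb1, integral_const_mul, gauss1 (show (0:ℝ) < c + ε by linarith) (b - a)]
    push_cast
    ring
  have inner : ∀ x : ℝ × ZMod 2, (∫ s : ℝ, f s x)
      = (Real.sqrt (Real.pi/ε) : ℂ) *
        ((Real.exp (-(x.1-a)^2/(4*ε)) : ℂ) * (-1:ℂ)^((x.2*l).val)) := by
    intro x
    have comb2 : ∀ s : ℝ, f s x = (-1:ℂ)^((x.2*l).val) *
        Complex.exp (-(ε:ℂ) * s^2 + Complex.I * s * ((x.1 - a : ℝ):ℂ)) := by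
      intro s
      simp only [hf, pairing, ← mul_assoc]
      rw [← Complex.exp_add, mul_comm]
      congr 2
      push_cast; ring
    simp_rw [comb2, integral_const_mul, gauss1 hε (x.1 - a)]
    rw [show (-(((x.1 - a : ℝ)):ℂ)^2 / (4*(ε:ℂ))) = ((-(x.1-a)^2/(4*ε) : ℝ) : ℂ) by
      push_cast; ring, ← Complex.ofReal_exp]
    ring
  have step : ∫ x, (∫ s : ℝ, f s x) ∂μ
      = (Real.sqrt (Real.pi/ε) : ℂ) *
        ∫ x, (Real.exp (-(x.1-a)^2/(4*ε)) : ℂ) * (-1:ℂ)^((x.2*l).val) ∂μ := by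
    simp_rw [inner]
    exact integral_const_mul _ _
  rw [← step, ← integral_integral_swap hint, outer]

theorem stmt_15 (μ : Measure (ℝ × ZMod 2)) [IsProbabilityMeasure μ]
    (σ σ' β β' κ : ℝ) (hσ : 0 ≤ σ) (hσ' : 0 ≤ σ') (hκ : κ ≠ 0) (hle : σ ≤ σ')
    (h0 : ∀ s : ℝ, charFun2 μ (s, 0) =
      Complex.exp (-(σ : ℂ) * s ^ 2 + (β : ℂ) * s * Complex.I))
    (h1 : ∀ s : ℝ, charFun2 μ (s, 1) =
      (κ : ℂ) * Complex.exp (-(σ' : ℂ) * s ^ 2 + (β' : ℂ) * s * Complex.I)) :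
    σ = σ' ∧ β = β' := by
  have h0' : ∀ s : ℝ, charFun2 μ (s, (0 : ZMod 2)) =
      (1:ℂ) * Complex.exp (-(σ:ℂ) * s^2 + (β:ℂ) * s * Complex.I) := by
    intro s; rw [h0, one_mul]
  have K0 := key μ 0 σ β 1 hσ h0'
  have K1 := key μ 1 σ' β' (κ:ℂ) hσ' h1
  -- real version of K0 at ε = 1
  have E0 : ∀ a : ℝ, Real.sqrt (Real.pi/1) * (∫ x : ℝ × ZMod 2, Real.exp (-(x.1-a)^2/4) ∂μ)
      = Real.sqrt (Real.pi/(σ+1)) * Real.exp (-(β-a)^2/(4*(σ+1))) := by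
    intro a
    have this := K0 1 a one_pos
    simp only [mul_zero, ZMod.val_zero, pow_zero, mul_one, one_mul] at this
    have hio : ∫ x : ℝ × ZMod 2, ((Real.exp (-(x.1-a)^2/4) : ℝ) : ℂ) ∂μ
        = ((∫ x : ℝ × ZMod 2, Real.exp (-(x.1-a)^2/4) ∂μ : ℝ) : ℂ) := integral_ofReal
    rw [hio] at this
    rw [show (-(((β-a : ℝ)):ℂ)^2 / (4*((σ:ℂ)+(1:ℝ)))) = ((-(β-a)^2/(4*(σ+1)) : ℝ) : ℂ) by
      push_cast; ring, ← Complex.ofReal_exp] at this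
    norm_num at this ⊢
    apply Complex.ofReal_injective; push_cast at this ⊢; linear_combination this
  have E1 : ∀ a : ℝ, Real.sqrt (Real.pi/1) *
        (∫ x : ℝ × ZMod 2, Real.exp (-(x.1-a)^2/4) * (-1:ℝ)^(x.2.val) ∂μ)
      = κ * Real.sqrt (Real.pi/(σ'+1)) * Real.exp (-(β'-a)^2/(4*(σ'+1))) := by
    intro a
    have this := K1 1 a one_pos
    simp only [mul_one] at this
    have hcoe : ∀ x : ℝ × ZMod 2,
        ((Real.exp (-(x.1-a)^2/4) : ℝ) : ℂ) * (-1:ℂ)^(x.2.val)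
          = ((Real.exp (-(x.1-a)^2/4) * (-1:ℝ)^(x.2.val) : ℝ) : ℂ) := by
      intro x; push_cast; ring
    simp_rw [hcoe] at this
    have hio : ∫ x : ℝ × ZMod 2, ((Real.exp (-(x.1-a)^2/4) * (-1:ℝ)^(x.2.val) : ℝ) : ℂ) ∂μ
        = ((∫ x : ℝ × ZMod 2, Real.exp (-(x.1-a)^2/4) * (-1:ℝ)^(x.2.val) ∂μ : ℝ) : ℂ) :=
      integral_ofReal
    rw [hio] at this
    rw [show (-(((β'-a : ℝ)):ℂ)^2 / (4*((σ':ℂ)+(1:ℝ)))) = ((-(β'-a)^2/(4*(σ'+1)) : ℝ) : ℂ) by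
      push_cast; ring, ← Complex.ofReal_exp] at this
    norm_num at this ⊢
    apply Complex.ofReal_injective; push_cast at this ⊢; linear_combination this
  -- the basic positivity inequality
  have hJ : ∀ a : ℝ, |∫ x : ℝ × ZMod 2, Real.exp (-(x.1-a)^2/4) * (-1:ℝ)^(x.2.val) ∂μ|
      ≤ ∫ x : ℝ × ZMod 2, Real.exp (-(x.1-a)^2/4) ∂μ := by
    intro a
    calc |∫ x : ℝ × ZMod 2, Real.exp (-(x.1-a)^2/4) * (-1:ℝ)^(x.2.val) ∂μ|
        = ‖∫ x : ℝ × ZMod 2, Real.exp (-(x.1-a)^2/4) * (-1:ℝ)^(x.2.val) ∂μ‖ :=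
          (Real.norm_eq_abs _).symm
      _ ≤ ∫ x : ℝ × ZMod 2, ‖Real.exp (-(x.1-a)^2/4) * (-1:ℝ)^(x.2.val)‖ ∂μ :=
          norm_integral_le_integral_norm _
      _ = ∫ x : ℝ × ZMod 2, Real.exp (-(x.1-a)^2/4) ∂μ := by
          refine integral_congr_ae (Filter.Eventually.of_forall fun x => ?_)
          simp [Real.norm_eq_abs, abs_mul, abs_pow, _root_.abs_of_nonneg (Real.exp_nonneg _)]
  have hsπ : 0 < Real.sqrt (Real.pi/1) := Real.sqrt_pos.2 (by positivity)
  have INEQ : ∀ a : ℝ,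
      |κ| * Real.sqrt (Real.pi/(σ'+1)) * Real.exp (-(β'-a)^2/(4*(σ'+1)))
      ≤ Real.sqrt (Real.pi/(σ+1)) * Real.exp (-(β-a)^2/(4*(σ+1))) := by
    intro a
    have h1' : |Real.sqrt (Real.pi/1) *
        (∫ x : ℝ × ZMod 2, Real.exp (-(x.1-a)^2/4) * (-1:ℝ)^(x.2.val) ∂μ)|
        ≤ Real.sqrt (Real.pi/1) * (∫ x : ℝ × ZMod 2, Real.exp (-(x.1-a)^2/4) ∂μ) := by
      rw [abs_mul, _root_.abs_of_nonneg hsπ.le]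
      exact mul_le_mul_of_nonneg_left (hJ a) hsπ.le
    rw [E1 a, E0 a, abs_mul, abs_mul, _root_.abs_of_nonneg (Real.sqrt_nonneg _),
      _root_.abs_of_nonneg (Real.exp_nonneg _)] at h1'
    exact h1'
  -- take logarithms
  have hκ' : 0 < |κ| := abs_pos.2 hκ
  have LOG2 : ∀ a : ℝ,
      Real.log |κ| + Real.log (Real.sqrt (Real.pi/(σ'+1))) - Real.log (Real.sqrt (Real.pi/(σ+1)))
      ≤ (β'-a)^2 / (4*(σ'+1)) - (β-a)^2 / (4*(σ+1)) := by
    intro a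
    have hpos : 0 < |κ| * Real.sqrt (Real.pi/(σ'+1)) * Real.exp (-(β'-a)^2/(4*(σ'+1))) := by
      have := abs_pos.2 hκ
      positivity
    have hl := Real.log_le_log hpos (INEQ a)
    have lA : Real.log (|κ| * Real.sqrt (Real.pi/(σ'+1)) * Real.exp (-(β'-a)^2/(4*(σ'+1))))
        = Real.log |κ| + Real.log (Real.sqrt (Real.pi/(σ'+1))) + (-(β'-a)^2/(4*(σ'+1))) := by
      rw [Real.log_mul (mul_ne_zero (ne_of_gt (abs_pos.2 hκ)) (by positivity))
        (Real.exp_ne_zero _),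
        Real.log_mul (ne_of_gt (abs_pos.2 hκ)) (by positivity), Real.log_exp]
    have lB : Real.log (Real.sqrt (Real.pi/(σ+1)) * Real.exp (-(β-a)^2/(4*(σ+1))))
        = Real.log (Real.sqrt (Real.pi/(σ+1))) + (-(β-a)^2/(4*(σ+1))) := by
      rw [Real.log_mul (by positivity) (Real.exp_ne_zero _), Real.log_exp]
    rw [lA, lB] at hl
    ring_nf at hl ⊢
    linarith
  set D := Real.log |κ| + Real.log (Real.sqrt (Real.pi/(σ'+1)))
      - Real.log (Real.sqrt (Real.pi/(σ+1))) with hD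
  have hσσ' : σ = σ' := by
    by_contra hne
    have hlt : σ < σ' := lt_of_le_of_ne hle hne
    have hA : ((4*(σ'+1))⁻¹ - (4*(σ+1))⁻¹ : ℝ) < 0 := by
      have h1' : ((4*(σ'+1))⁻¹ : ℝ) < (4*(σ+1))⁻¹ := by
        apply inv_strictAnti₀ (by linarith) (by linarith)
      linarith
    set A := ((4*(σ'+1))⁻¹ - (4*(σ+1))⁻¹ : ℝ) with hA'
    set E := (β'^2/(4*(σ'+1)) - β^2/(4*(σ+1)) : ℝ) with hE'
    have hq : ∀ t : ℝ, D - E ≤ t^2 * A := by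
      intro t
      rw [hA', hE']
      have l1 := LOG2 t
      have l2 := LOG2 (-t)
      ring_nf at l1 l2 ⊢
      linarith
    set t := max 1 ((D - E - 1)/A) with ht'
    have ht1 : (1:ℝ) ≤ t := le_max_left _ _
    have ht2 : (D - E - 1)/A ≤ t := le_max_right _ _
    have htt : t ≤ t^2 := by
      nlinarith [mul_nonneg (le_trans zero_le_one ht1) (sub_nonneg.2 ht1)]
    have s1 : t^2 * A ≤ t * A := mul_le_mul_of_nonpos_right htt hA.le
    have s2 : t * A ≤ D - E - 1 := by
      have h := mul_le_mul_of_nonpos_right ht2 hA.le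
      rwa [div_mul_cancel₀ _ (ne_of_lt hA)] at h
    linarith [hq t, s1, s2]
  refine ⟨hσσ', ?_⟩
  by_contra hbe
  rw [hσσ'] at LOG2
  have hu : (0:ℝ) < 4*(σ'+1) := by linarith
  have hbb : β - β' ≠ 0 := sub_ne_zero.2 hbe
  set a0 := ((4*(σ'+1))*(D-1) - (β'^2 - β^2))/(2*(β-β')) with ha0
  have hkey : (β'-a0)^2/(4*(σ'+1)) - (β-a0)^2/(4*(σ'+1)) = D - 1 := by
    rw [ha0]
    field_simp
    ring
  linarith [LOG2 a0, hkey]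
end

section
/- Let ψ : ℝ → ℂ and ψ₂, …, ψ_m, χ₁, …, χ_n : ℝ → ℂ be functions satisfying ψ(α₁s₁ + β₁s₂) + Σ_{j=2}^m ψ_j(α_j s₁ + β_j s₂) = Σ_{j=1}^n χ_j(γ_j s₁ + δ_j s₂) for all s₁, s₂ ∈ ℝ, where α_j, β_j, γ_j, δ_j ∈ ℝ, α₁ ≠ 0, α₁δ_j − β₁γ_j ≠ 0 for all j = 1,…,n, and α₁β_j − β₁α_j ≠ 0 for all j = 2,…,m. Then Δ_h^{n+m−1} ψ(s) = 0 for all s, h ∈ ℝ. -/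
/-- Evaluation of a (coefficient pair, function) term at `(s₁, s₂)`. -/
def ev (s₁ s₂ : ℝ) (p : (ℝ × ℝ) × (ℝ → ℂ)) : ℂ := p.2 (p.1.1 * s₁ + p.1.2 * s₂)

lemma sum_map_sub {α : Type*} (l : List α) (f g : α → ℂ) :
    (l.map fun x => f x - g x).sum = (l.map f).sum - (l.map g).sum := by
  induction l with
  | nil => simp
  | cons x xs ih => simp [ih]; ring

lemma elimP (a b : ℝ) (ha : a ≠ 0) :
    ∀ (k : ℕ) (P : List ((ℝ × ℝ) × (ℝ → ℂ))) (f : ℝ → ℂ), P.length = k →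
    (∀ p ∈ P, a * p.1.2 - b * p.1.1 ≠ 0) →
    (∀ s₁ s₂ : ℝ, f (a * s₁ + b * s₂) + (P.map (ev s₁ s₂)).sum = 0) →
    ∀ s h : ℝ, (fdiff h)^[k] f s = 0 := by
  intro k
  induction k with
  | zero =>
    intro P f hlen _ heq s h
    rw [List.length_eq_zero_iff] at hlen
    subst hlen
    have := heq (s / a) 0
    simp at this
    simpa [mul_div_cancel₀ s ha] using this
  | succ k ih =>
    rintro (_ | ⟨p, P'⟩) f hlen hP heq s h
    · simp at hlen
    simp only [List.length_cons, Nat.succ.injEq] at hlen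
    set c := a * p.1.2 - b * p.1.1 with hc
    have hc0 : c ≠ 0 := hP p List.mem_cons_self
    set t := h / c with htdef
    have ht : c * t = h := mul_div_cancel₀ h hc0
    set P'' : List ((ℝ × ℝ) × (ℝ → ℂ)) :=
      P'.map (fun q => (q.1,
        fun x => q.2 (x + (q.1.1 * p.1.2 - q.1.2 * p.1.1) * t) - q.2 x)) with hP''
    have heq' : ∀ s₁ s₂ : ℝ,
        (fdiff h f) (a * s₁ + b * s₂) + (P''.map (ev s₁ s₂)).sum = 0 := by
      intro s₁ s₂
      have e1 := heq s₁ s₂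
      have e2 := heq (s₁ + p.1.2 * t) (s₂ - p.1.1 * t)
      simp only [List.map_cons, List.sum_cons] at e1 e2
      have ha1 : a * (s₁ + p.1.2 * t) + b * (s₂ - p.1.1 * t) = (a * s₁ + b * s₂) + h := by
        rw [← ht, hc]; ring
      have ha2 : ev (s₁ + p.1.2 * t) (s₂ - p.1.1 * t) p = ev s₁ s₂ p := by
        unfold ev; congr 1; ring
      rw [ha1, ha2] at e2
      have hsum : (P''.map (ev s₁ s₂)).sum
          = (P'.map (ev (s₁ + p.1.2 * t) (s₂ - p.1.1 * t))).sum
            - (P'.map (ev s₁ s₂)).sum := by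
        rw [hP'', List.map_map, ← sum_map_sub]
        apply congrArg
        apply List.map_congr_left
        intro q _
        show q.2 _ - q.2 _ = _
        unfold ev
        congr 2
        ring
      rw [hsum]
      show f ((a * s₁ + b * s₂) + h) - f (a * s₁ + b * s₂) + _ = 0
      linear_combination e2 - e1
    have hcond : ∀ q ∈ P'', a * q.1.2 - b * q.1.1 ≠ 0 := by
      intro q hq
      rw [hP'', List.mem_map] at hq
      obtain ⟨r, hr, rfl⟩ := hq
      exact hP r (List.mem_cons_of_mem _ hr)
    have hlen'' : P''.length = k := by rw [hP'', List.length_map]; exact hlen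
    have := ih P'' (fdiff h f) hlen'' hcond heq' s h
    rwa [Function.iterate_succ_apply]

lemma elimQ (a b : ℝ) (ha : a ≠ 0) :
    ∀ (k : ℕ) (Q P : List ((ℝ × ℝ) × (ℝ → ℂ))) (f : ℝ → ℂ), Q.length = k →
    (∀ p ∈ P, a * p.1.2 - b * p.1.1 ≠ 0) →
    (∀ q ∈ Q, a * q.1.2 - b * q.1.1 ≠ 0) →
    (∀ s₁ s₂ : ℝ, f (a * s₁ + b * s₂) + (P.map (ev s₁ s₂)).sum = (Q.map (ev s₁ s₂)).sum) →
    ∀ s h : ℝ, (fdiff h)^[k + P.length] f s = 0 := by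
  intro k
  induction k with
  | zero =>
    intro Q P f hlen hP _ heq s h
    rw [List.length_eq_zero_iff] at hlen
    subst hlen
    simp only [List.map_nil, List.sum_nil] at heq
    simpa using elimP a b ha P.length P f rfl hP heq s h
  | succ k ih =>
    rintro (_ | ⟨q, Q'⟩) P f hlen hP hQ heq s h
    · simp at hlen
    simp only [List.length_cons, Nat.succ.injEq] at hlen
    set c := a * q.1.2 - b * q.1.1 with hc
    have hc0 : c ≠ 0 := hQ q List.mem_cons_self
    set t := h / c with htdef
    have ht : c * t = h := mul_div_cancel₀ h hc0
    set P'' : List ((ℝ × ℝ) × (ℝ → ℂ)) :=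
      P.map (fun r => (r.1,
        fun x => r.2 (x + (r.1.1 * q.1.2 - r.1.2 * q.1.1) * t) - r.2 x)) with hP''
    set Q'' : List ((ℝ × ℝ) × (ℝ → ℂ)) :=
      Q'.map (fun r => (r.1,
        fun x => r.2 (x + (r.1.1 * q.1.2 - r.1.2 * q.1.1) * t) - r.2 x)) with hQ''
    have heq' : ∀ s₁ s₂ : ℝ,
        (fdiff h f) (a * s₁ + b * s₂) + (P''.map (ev s₁ s₂)).sum
          = (Q''.map (ev s₁ s₂)).sum := by
      intro s₁ s₂
      have e1 := heq s₁ s₂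
      have e2 := heq (s₁ + q.1.2 * t) (s₂ - q.1.1 * t)
      simp only [List.map_cons, List.sum_cons] at e1 e2
      have ha1 : a * (s₁ + q.1.2 * t) + b * (s₂ - q.1.1 * t) = (a * s₁ + b * s₂) + h := by
        rw [← ht, hc]; ring
      have ha2 : ev (s₁ + q.1.2 * t) (s₂ - q.1.1 * t) q = ev s₁ s₂ q := by
        unfold ev; congr 1; ring
      rw [ha1, ha2] at e2
      have hsumP : (P''.map (ev s₁ s₂)).sum
          = (P.map (ev (s₁ + q.1.2 * t) (s₂ - q.1.1 * t))).sum
            - (P.map (ev s₁ s₂)).sum := by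
        rw [hP'', List.map_map, ← sum_map_sub]
        apply congrArg
        apply List.map_congr_left
        intro r _
        show r.2 _ - r.2 _ = _
        unfold ev
        congr 2
        ring
      have hsumQ : (Q''.map (ev s₁ s₂)).sum
          = (Q'.map (ev (s₁ + q.1.2 * t) (s₂ - q.1.1 * t))).sum
            - (Q'.map (ev s₁ s₂)).sum := by
        rw [hQ'', List.map_map, ← sum_map_sub]
        apply congrArg
        apply List.map_congr_left
        intro r _
        show r.2 _ - r.2 _ = _
        unfold ev
        congr 2
        ring
      rw [hsumP, hsumQ]
      show f ((a * s₁ + b * s₂) + h) - f (a * s₁ + b * s₂) + _ = _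
      linear_combination e2 - e1
    have hcondP : ∀ r ∈ P'', a * r.1.2 - b * r.1.1 ≠ 0 := by
      intro r hr
      rw [hP'', List.mem_map] at hr
      obtain ⟨u, hu, rfl⟩ := hr
      exact hP u hu
    have hcondQ : ∀ r ∈ Q'', a * r.1.2 - b * r.1.1 ≠ 0 := by
      intro r hr
      rw [hQ'', List.mem_map] at hr
      obtain ⟨u, hu, rfl⟩ := hr
      exact hQ u (List.mem_cons_of_mem _ hu)
    have hlen'' : Q''.length = k := by rw [hQ'', List.length_map]; exact hlen
    have hlenP : P''.length = P.length := by rw [hP'', List.length_map]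
    have := ih Q'' P'' (fdiff h f) hlen'' hcondP hcondQ heq' s h
    rw [hlenP] at this
    rwa [show k + 1 + P.length = (k + P.length) + 1 by omega,
      Function.iterate_succ_apply]

theorem stmt_18 (m n : ℕ) (hm : 0 < m) (α β : Fin m → ℝ) (γ δ : Fin n → ℝ)
    (ψ : Fin m → ℝ → ℂ) (χ : Fin n → ℝ → ℂ)
    (hα : α ⟨0, hm⟩ ≠ 0)
    (h1 : ∀ j, α ⟨0, hm⟩ * δ j - β ⟨0, hm⟩ * γ j ≠ 0)
    (h2 : ∀ j : Fin m, j ≠ ⟨0, hm⟩ → α ⟨0, hm⟩ * β j - β ⟨0, hm⟩ * α j ≠ 0)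
    (heq : ∀ s₁ s₂ : ℝ, ∑ j, ψ j (α j * s₁ + β j * s₂) = ∑ j, χ j (γ j * s₁ + δ j * s₂)) :
    ∀ s h : ℝ, (fdiff h)^[n + m - 1] (ψ ⟨0, hm⟩) s = 0 := by
  obtain ⟨m', rfl⟩ : ∃ m', m = m' + 1 := ⟨m - 1, (Nat.succ_pred_eq_of_pos hm).symm⟩
  have h0 : (⟨0, hm⟩ : Fin (m' + 1)) = 0 := rfl
  rw [h0] at hα h1 h2 ⊢
  set P : List ((ℝ × ℝ) × (ℝ → ℂ)) :=
    List.ofFn (fun j : Fin m' => ((α j.succ, β j.succ), ψ j.succ)) with hPdef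
  set Q : List ((ℝ × ℝ) × (ℝ → ℂ)) :=
    List.ofFn (fun j : Fin n => ((γ j, δ j), χ j)) with hQdef
  have hcondP : ∀ p ∈ P, α 0 * p.1.2 - β 0 * p.1.1 ≠ 0 := by
    intro p hp
    rw [hPdef, List.mem_ofFn] at hp
    obtain ⟨j, rfl⟩ := hp
    exact h2 j.succ (Fin.succ_ne_zero j)
  have hcondQ : ∀ q ∈ Q, α 0 * q.1.2 - β 0 * q.1.1 ≠ 0 := by
    intro q hq
    rw [hQdef, List.mem_ofFn] at hq
    obtain ⟨j, rfl⟩ := hq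
    exact h1 j
  have heq' : ∀ s₁ s₂ : ℝ,
      ψ 0 (α 0 * s₁ + β 0 * s₂) + (P.map (ev s₁ s₂)).sum = (Q.map (ev s₁ s₂)).sum := by
    intro s₁ s₂
    have e := heq s₁ s₂
    rw [Fin.sum_univ_succ] at e
    rw [hPdef, hQdef, List.map_ofFn, List.map_ofFn, List.sum_ofFn, List.sum_ofFn]
    simpa [ev, Function.comp] using e
  intro s h
  have := elimQ (α 0) (β 0) hα n Q P (ψ 0) (by rw [hQdef, List.length_ofFn]) hcondP hcondQ heq' s h
  rw [hPdef, List.length_ofFn] at this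
  rwa [show n + (m' + 1) - 1 = n + m' by omega]
end
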